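/- Suppose for each i, (Hᵢ + αI)yᵢ − gᵢ + λᵢ + s = 0 and (Hᵢ + αI)yᵢ* − gᵢ + λᵢ* = 0 where Hᵢ is symmetric positive semidefinite and α > 0. Then Σᵢ⟨λᵢ + s − λᵢ*, yᵢ − yᵢ*⟩ ≤ −α Σᵢ‖yᵢ − yᵢ*‖². -/

import Mathlib

open Matrix
open scoped RealInnerProductSpace BigOperators

/-!
Subtracting the two optimality conditions gives `λᵢ + s − λᵢ⋆ = −(Hᵢ + αI)(yᵢ − yᵢ⋆)`, so each
summand is `−⟪(Hᵢ + αI) v, v⟫` with `v = yᵢ − yᵢ⋆`, and positive semidefiniteness of `Hᵢ` bounds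
this by `−α‖v‖²`.
-/

open scoped ComplexOrder in
theorem Matrix.PosSemidef.isPositive_toEuclideanCLM {𝕜 ι : Type*} [RCLike 𝕜] [Fintype ι]
    [DecidableEq ι] {A : Matrix ι ι 𝕜} (hA : A.PosSemidef) :
    (toEuclideanCLM (𝕜 := 𝕜) A).IsPositive :=
  Matrix.isPositive_toEuclideanLin_iff.mpr hA

section RealInnerProductSpace

variable {E : Type*} [NormedAddCommGroup E] [InnerProductSpace ℝ E]

theorem ContinuousLinearMap.IsPositive.mul_norm_sq_le_inner_add_smul_one {T : E →L[ℝ] E}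
    (hT : T.IsPositive) (α : ℝ) (x : E) :
    α * ‖x‖ ^ 2 ≤ ⟪(T + α • 1) x, x⟫ := by
  rw [_root_.add_apply, inner_add_left, _root_.smul_apply, one_apply_eq_self, real_inner_smul_left,
    real_inner_self_eq_norm_sq]
  linarith [hT.inner_nonneg_left x]

theorem inner_dual_residual_le_of_coercive {S : E →L[ℝ] E} {α : ℝ}
    (hS : ∀ x, α * ‖x‖ ^ 2 ≤ ⟪S x, x⟫) {y ystar g lam lamstar s : E}
    (hprim : S y - g + lam + s = 0) (hdual : S ystar - g + lamstar = 0) :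
    ⟪lam + s - lamstar, y - ystar⟫ ≤ -α * ‖y - ystar‖ ^ 2 := by
  have hresidual : lam + s - lamstar = -S (y - ystar) := by
    rw [map_sub, ← sub_eq_zero, ← sub_eq_zero.mpr (hprim.trans hdual.symm)]
    abel
  rw [hresidual, inner_neg_left, neg_mul, neg_le_neg_iff]
  exact hS _

end RealInnerProductSpace

theorem fednew_lemma1_general
    {d n : ℕ}
    (H : Fin n → Matrix (Fin d) (Fin d) ℝ)
    (hHpsd : ∀ i, (H i).PosSemidef)
    (α : ℝ)
    (y ystar g lam lamstar : Fin n → EuclideanSpace ℝ (Fin d))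
    (s : EuclideanSpace ℝ (Fin d))
    (hprim : ∀ i,
      (Matrix.toEuclideanCLM (𝕜 := ℝ) (H i + α • (1 : Matrix (Fin d) (Fin d) ℝ))) (y i)
        - g i + lam i + s = 0)
    (hdual : ∀ i,
      (Matrix.toEuclideanCLM (𝕜 := ℝ) (H i + α • (1 : Matrix (Fin d) (Fin d) ℝ)))
          (ystar i) - g i + lamstar i = 0) :
    ∑ i, ⟪lam i + s - lamstar i, y i - ystar i⟫ ≤ -α * ∑ i, ‖y i - ystar i‖ ^ 2 := by
  rw [Finset.mul_sum]
  refine Finset.sum_le_sum fun i _ ↦ inner_dual_residual_le_of_coercive (fun x ↦ ?_) (hprim i)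
    (hdual i)
  rw [map_add, map_smul, map_one]
  exact (hHpsd i).isPositive_toEuclideanCLM.mul_norm_sq_le_inner_add_smul_one α x

/-- Lemma 1 of FedNew: If for each `i`,
`(Hᵢ + αI) yᵢ − gᵢ + λᵢ + s = 0` and `(Hᵢ + αI) yᵢ⋆ − gᵢ + λᵢ⋆ = 0` with `Hᵢ`
symmetric PSD and `α > 0`, then
`Σᵢ ⟨λᵢ + s − λᵢ⋆, yᵢ − yᵢ⋆⟩ ≤ −α Σᵢ ‖yᵢ − yᵢ⋆‖²`. -/
theorem fednew_lemma1
    {d n : ℕ}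
    (H : Fin n → Matrix (Fin d) (Fin d) ℝ)
    (hHsymm : ∀ i, (H i).IsSymm) (hHpsd : ∀ i, (H i).PosSemidef)
    (α : ℝ) (hα : 0 < α)
    (y ystar g lam lamstar : Fin n → EuclideanSpace ℝ (Fin d))
    (s : EuclideanSpace ℝ (Fin d))
    (hprim : ∀ i,
      (Matrix.toEuclideanCLM (𝕜 := ℝ) (H i + α • (1 : Matrix (Fin d) (Fin d) ℝ))) (y i)
        - g i + lam i + s = 0)
    (hdual : ∀ i,
      (Matrix.toEuclideanCLM (𝕜 := ℝ) (H i + α • (1 : Matrix (Fin d) (Fin d) ℝ)))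
          (ystar i) - g i + lamstar i = 0) :
    ∑ i, ⟪lam i + s - lamstar i, y i - ystar i⟫ ≤ -α * ∑ i, ‖y i - ystar i‖ ^ 2 :=
  fednew_lemma1_general H hHpsd α y ystar g lam lamstar s hprim hdual
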